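/- Let σ = (P, Z) be a lax pre-stability condition with massless subcategory N. If Q is a slicing of C with d(P, Q) < 1/8, then Q restricts to a slicing of N, i.e. all Q-semistable HN factors of every object of N lie in N. In particular, this applies to the slicing of any lax pre-stability condition in B_ε(σ) for 0 < ε < 1/8. -/

import Mathlib

/-!
Let `Q` be a slicing with `d(P, Q) < δ ≤ 1/2`, and let `X` be massless with `Q`-HN filtration
`0 = X₀ → ⋯ → Xₙ = X`. Going down the filtration, suppose `X_{k+1}` is massless and look at the
triangle `X_k → X_{k+1} → B` with `B ∈ Q(ψ)`; all `Q`-phases of `X_k` exceed `ψ`. Hence the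
`σ`-phases of `B` lie in `(ψ - δ, ψ + δ)` and those of `X_k` exceed `ψ - δ`. Since `B` has no
`σ`-phases `≥ c := ψ + δ`, the `σ`-truncations `X_k^{≥c'}` and `X_{k+1}^{≥c'}` agree for `c' ≥ c`,
so the `σ`-factors of `X_k` of phase `≥ c` are massless. The remaining factors of `X_k` and those of
`B` have phases in `(ψ - δ, ψ + δ)`, an interval of length at most `1`, and their charges add up to
`Z(X_{k+1}) = 0`; charges with phases in such an interval summing to zero all vanish. So `X_k` and
`B` are massless.
-/

open CategoryTheory CategoryTheory.Limits CategoryTheory.Pretriangulated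
open scoped ENNReal

namespace PaperStab

attribute [local instance] Classical.propDecidable

universe w w₂ u v u₂ v₂

variable (C : Type u) [Category.{v} C] [Preadditive C] [HasZeroObject C]
  [HasShift C ℤ] [∀ n : ℤ, (shiftFunctor C n).Additive] [Pretriangulated C]

/-- A Harder–Narasimhan filtration of `X` with factors in the slices `P`. -/
structure HNFiltration (P : ℝ → Set C) (X : C) where
  n : ℕ
  obj : Fin (n + 1) → C
  isZero_zero : IsZero (obj 0)
  last_eq : obj (Fin.last n) = X
  map : ∀ i : Fin n, obj i.castSucc ⟶ obj i.succ
  factor : Fin n → C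
  phase : Fin n → ℝ
  phase_anti : ∀ i j : Fin n, i < j → phase j < phase i
  factor_nonzero : ∀ i, ¬ IsZero (factor i)
  factor_mem : ∀ i, factor i ∈ P (phase i)
  toFactor : ∀ i : Fin n, obj i.succ ⟶ factor i
  toShift : ∀ i : Fin n, factor i ⟶ (obj i.castSucc)⟦(1 : ℤ)⟧
  distinguished : ∀ i : Fin n,
    Triangle.mk (map i) (toFactor i) (toShift i) ∈ distTriang C

/-- A slicing of the full (triangulated) subcategory of `C` on the objects `N`.
A slicing of `C` itself is the case `N = Set.univ`. -/
structure Slicing (N : Set C) where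
  P : ℝ → Set C
  subset : ∀ φ : ℝ, P φ ⊆ N
  isoClosed : ∀ (φ : ℝ) ⦃X Y : C⦄, (X ≅ Y) → Y ∈ N → X ∈ P φ → Y ∈ P φ
  zero_mem : ∀ (φ : ℝ) ⦃X : C⦄, IsZero X → X ∈ N → X ∈ P φ
  shift_mem : ∀ (φ : ℝ) (X : C), X ∈ P (φ + 1) ↔ X⟦(-1 : ℤ)⟧ ∈ P φ
  hom_orth : ∀ ⦃φ ψ : ℝ⦄, ψ < φ → ∀ ⦃X Y : C⦄, X ∈ P φ → Y ∈ P ψ → ∀ f : X ⟶ Y, f = 0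
  hn : ∀ X ∈ N, ¬ IsZero X → Nonempty (HNFiltration C P X)

/-- Thick subcategory: strictly full triangulated subcategory closed under direct summands. -/
structure IsThick (N : Set C) : Prop where
  isoClosed : ∀ ⦃X Y : C⦄, (X ≅ Y) → X ∈ N → Y ∈ N
  zero_mem : ∀ ⦃X : C⦄, IsZero X → X ∈ N
  shift_mem : ∀ (X : C) (k : ℤ), X ∈ N → X⟦k⟧ ∈ N
  ext_mem : ∀ T ∈ distTriang C, T.obj₁ ∈ N → T.obj₃ ∈ N → T.obj₂ ∈ N
  summand_mem : ∀ ⦃X Z : C⦄ (i : X ⟶ Z) (r : Z ⟶ X), i ≫ r = 𝟙 X → Z ∈ N → X ∈ N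

/-- The set `M` is (the object set of) a strictly full triangulated subcategory. -/
def IsTriangulatedClosed (M : Set C) : Prop :=
  (∀ ⦃X Y : C⦄, (X ≅ Y) → X ∈ M → Y ∈ M) ∧ (∀ ⦃X : C⦄, IsZero X → X ∈ M) ∧
  (∀ (X : C) (k : ℤ), X ∈ M → X⟦k⟧ ∈ M) ∧
  (∀ T ∈ distTriang C, T.obj₁ ∈ M → T.obj₃ ∈ M → T.obj₂ ∈ M)

/-- Triangulated closure: smallest strictly full triangulated subcategory containing `S0`. -/
def triangClosure (S0 : Set C) : Set C :=
  ⋂₀ {M : Set C | S0 ⊆ M ∧ IsTriangulatedClosed C M}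

/-- No infinite chains of proper strict subobjects or proper strict quotients within `H`
(with respect to the strict exact structure induced by the triangles of `C`);
this expresses that `H` is a length (quasi-abelian) category. -/
def NoInfiniteChains (H : Set C) : Prop :=
  (¬ ∃ (X : ℕ → C) (f : ∀ k : ℕ, X (k + 1) ⟶ X k), ∀ k : ℕ,
      X (k + 1) ∈ H ∧ X k ∈ H ∧ ∃ (Q : C) (g : X k ⟶ Q) (h : Q ⟶ (X (k + 1))⟦(1 : ℤ)⟧),
        Triangle.mk (f k) g h ∈ (distTriang C) ∧ Q ∈ H ∧ ¬ IsZero Q) ∧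
  (¬ ∃ (X : ℕ → C) (f : ∀ k : ℕ, X k ⟶ X (k + 1)), ∀ k : ℕ,
      X k ∈ H ∧ X (k + 1) ∈ H ∧ ∃ (A : C) (e : A ⟶ X k) (h : X (k + 1) ⟶ A⟦(1 : ℤ)⟧),
        Triangle.mk e (f k) h ∈ (distTriang C) ∧ A ∈ H ∧ ¬ IsZero A)

/-- `X` is a simple object of the (quasi-)abelian subcategory on `H`. -/
def IsSimpleIn (H : Set C) (X : C) : Prop :=
  X ∈ H ∧ ¬ IsZero X ∧ ∀ (A Q : C) (f : A ⟶ X) (g : X ⟶ Q) (h : Q ⟶ A⟦(1 : ℤ)⟧),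
    Triangle.mk f g h ∈ (distTriang C) → A ∈ H → Q ∈ H → IsZero A ∨ IsZero Q

/-- An algebraic heart: a length category with finitely many simple objects up to isomorphism. -/
def AlgebraicHeart (H : Set C) : Prop :=
  NoInfiniteChains C H ∧ ∃ S : Set C, S.Finite ∧
    (∀ X ∈ S, IsSimpleIn C H X) ∧ ∀ X : C, IsSimpleIn C H X → ∃ Y ∈ S, Nonempty (X ≅ Y)

/-- A torsion pair `(T, Fr)` on the heart `H`. -/
def TorsionPair (H T Fr : Set C) : Prop :=
  T ⊆ H ∧ Fr ⊆ H ∧ (∀ X ∈ T, ∀ Y ∈ Fr, ∀ f : X ⟶ Y, f = 0) ∧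
  ∀ X ∈ H, ∃ (A B : C) (f : A ⟶ X) (g : X ⟶ B) (h : B ⟶ A⟦(1 : ℤ)⟧),
    Triangle.mk f g h ∈ (distTriang C) ∧ A ∈ T ∧ B ∈ Fr

/-- The class of morphisms with cone in `N`; inverting it gives the Verdier quotient `C/N`. -/
def VerdierW (N : Set C) : MorphismProperty C := fun X Y f =>
  ∃ (Z : C) (g : Y ⟶ Z) (h : Z ⟶ X⟦(1 : ℤ)⟧), Triangle.mk f g h ∈ (distTriang C) ∧ Z ∈ N

variable {C}

noncomputable def Slicing.maxPhase {N : Set C} (S : Slicing C N) (X : C) : ℝ :=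
  if h : X ∈ N ∧ ¬ IsZero X then ⨆ i, (S.hn X h.1 h.2).some.phase i else 0

noncomputable def Slicing.minPhase {N : Set C} (S : Slicing C N) (X : C) : ℝ :=
  if h : X ∈ N ∧ ¬ IsZero X then ⨅ i, (S.hn X h.1 h.2).some.phase i else 0

/-- The metric on slicings, `d(S, T) = sup max (|φ⁺_S - φ⁺_T|) (|φ⁻_S - φ⁻_T|)`,
with values in `[0, ∞]`. -/
noncomputable def slicingDist {N : Set C} (S T : Slicing C N) : ℝ≥0∞ :=
  ⨆ X : C, ENNReal.ofReal
    (max |S.maxPhase X - T.maxPhase X| |S.minPhase X - T.minPhase X|)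

/-- `P(I)`: objects whose HN factors have phases in the interval `I`. -/
def Slicing.interval {N : Set C} (S : Slicing C N) (I : Set ℝ) : Set C :=
  {X | X ∈ N ∧ (IsZero X ∨ ∃ F : HNFiltration C S.P X, ∀ i, F.phase i ∈ I)}

/-- `P(I)` is a length quasi-abelian category. -/
def Slicing.LengthOn {N : Set C} (S : Slicing C N) (I : Set ℝ) : Prop :=
  NoInfiniteChains C (S.interval I)

def Slicing.LocallyFinite {N : Set C} (S : Slicing C N) : Prop :=
  ∃ ε > (0 : ℝ), ∀ φ : ℝ, S.LengthOn (Set.Ioo (φ - ε) (φ + ε))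

/-- The slicing `S` restricts to the subcategory `N`: HN factors of objects of `N` lie in `N`. -/
def Slicing.RestrictsTo {N0 : Set C} (S : Slicing C N0) (N : Set C) : Prop :=
  ∀ X ∈ N, ¬ IsZero X → ∃ F : HNFiltration C S.P X, ∀ i, F.factor i ∈ N

/-- `P(I) ∩ N` is a Serre subcategory of `P(I)`. -/
def Slicing.SerreOn {N0 : Set C} (S : Slicing C N0) (N : Set C) (I : Set ℝ) : Prop :=
  ∀ T ∈ distTriang C, T.obj₁ ∈ S.interval I → T.obj₂ ∈ S.interval I →
    T.obj₃ ∈ S.interval I → (T.obj₂ ∈ N ↔ T.obj₁ ∈ N ∧ T.obj₃ ∈ N)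

/-- The slicing `S` is adapted to the thick subcategory `N`. -/
def Slicing.IsAdapted {N0 : Set C} (S : Slicing C N0) (N : Set C) : Prop :=
  S.RestrictsTo N ∧
    ∀ φ : ℝ, S.SerreOn N (Set.Ioc φ (φ + 1)) ∧ S.SerreOn N (Set.Ico φ (φ + 1))

variable (C)
variable (E : Type w) [NormedAddCommGroup E] [InnerProductSpace ℝ E] [FiniteDimensional ℝ E]

/-- The data of the map `v : K(C) → Λ`, realised on `Λ ⊗ ℝ = E`. -/
structure ChargeData where
  v : C → E
  additive : ∀ T ∈ distTriang C, v T.obj₂ = v T.obj₁ + v T.obj₃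

/-- A lax pre-stability condition on the (full triangulated) subcategory `N ⊆ C`,
with locally finite slicing, and charge a linear map `E → ℂ`. -/
structure LaxPreStab (N : Set C) (vd : ChargeData C E) where
  slicing : Slicing C N
  locallyFinite : slicing.LocallyFinite
  Z : E →L[ℝ] ℂ
  compat : ∀ (φ : ℝ) (X : C), X ∈ slicing.P φ → ∃ m : ℝ, 0 ≤ m ∧
    Z (vd.v X) = (m : ℂ) * Complex.exp (↑(Real.pi * φ) * Complex.I)

variable {C E}

/-- The mass of an object: sum of the masses of its HN factors. -/
noncomputable def LaxPreStab.mass {N : Set C} {vd : ChargeData C E}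
    (σ : LaxPreStab C E N vd) (X : C) : ℝ :=
  if h : X ∈ N ∧ ¬ IsZero X then
    ∑ i, ‖σ.Z (vd.v ((σ.slicing.hn X h.1 h.2).some.factor i))‖
  else 0

/-- The massless subcategory of a lax pre-stability condition. -/
def LaxPreStab.massless {N : Set C} {vd : ChargeData C E}
    (σ : LaxPreStab C E N vd) : Set C :=
  {X | X ∈ N ∧ σ.mass X = 0}


/-- The set of phases of the massive HN factors of an object. -/
noncomputable def LaxPreStab.massivePhases {N : Set C} {vd : ChargeData C E}
    (σ : LaxPreStab C E N vd) (X : C) : Set ℝ :=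
  if h : X ∈ N ∧ ¬ IsZero X then
    {φ | ∃ i, (σ.slicing.hn X h.1 h.2).some.phase i = φ ∧
      σ.Z (vd.v ((σ.slicing.hn X h.1 h.2).some.factor i)) ≠ 0}
  else ∅

/-- A stable object of phase `φ`: a simple object of the slice `P(φ)`. -/
def Slicing.IsStableIn {N : Set C} (S : Slicing C N) (φ : ℝ) (X : C) : Prop :=
  ¬ IsZero X ∧ X ∈ S.P φ ∧
    ∀ (A Q : C) (f : A ⟶ X) (g : X ⟶ Q) (h : Q ⟶ A⟦(1 : ℤ)⟧),
      Triangle.mk f g h ∈ (distTriang C) → A ∈ S.P φ → Q ∈ S.P φ → IsZero A ∨ IsZero Q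

def Slicing.IsStable {N : Set C} (S : Slicing C N) (X : C) : Prop :=
  ∃ φ : ℝ, S.IsStableIn φ X

def LaxPreStab.MassiveStable {N : Set C} {vd : ChargeData C E}
    (σ : LaxPreStab C E N vd) (X : C) : Prop :=
  σ.slicing.IsStable X ∧ σ.Z (vd.v X) ≠ 0

/-- The support property: `|Z(v(s))| ≥ ‖v(s)‖ / K` for all massive stable `s`. -/
def LaxPreStab.HasSupport {N : Set C} {vd : ChargeData C E}
    (σ : LaxPreStab C E N vd) : Prop :=
  ∃ K > (0 : ℝ), ∀ X : C, σ.MassiveStable X → ‖vd.v X‖ / K ≤ ‖σ.Z (vd.v X)‖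

/-- A classical (pre-)stability condition: every non-zero object is massive. -/
def LaxPreStab.IsClassical {N : Set C} {vd : ChargeData C E}
    (σ : LaxPreStab C E N vd) : Prop :=
  ∀ X ∈ N, σ.mass X = 0 → IsZero X

/-- The semi-norm `‖W‖_σ` associated to a lax pre-stability condition, valued in `[0,∞]`. -/
noncomputable def LaxPreStab.seminorm {N : Set C} {vd : ChargeData C E}
    (σ : LaxPreStab C E N vd) (W : E →L[ℝ] ℂ) : ℝ≥0∞ :=
  ⨆ (X : C) (_ : σ.MassiveStable X), ENNReal.ofReal (‖W (vd.v X)‖ / ‖σ.Z (vd.v X)‖)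

/-- The (extended pseudo-)metric `max (d(P,Q)) (‖W - Z‖)` on the space of
lax pre-stability conditions; this induces the topology of
`Slice(C) × Hom(Λ, ℂ)`. -/
noncomputable instance {N : Set C} {vd : ChargeData C E} :
    PseudoEMetricSpace (LaxPreStab C E N vd) where
  edist σ τ := max (slicingDist σ.slicing τ.slicing) (ENNReal.ofReal ‖σ.Z - τ.Z‖)
  edist_self σ := by
    have h1 : slicingDist σ.slicing σ.slicing = 0 := by
      unfold slicingDist
      refine le_antisymm (iSup_le fun X => by simp) zero_le
    have h2 : ENNReal.ofReal ‖σ.Z - σ.Z‖ = 0 := by simp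
    simp [h1, h2]
  edist_comm σ τ := by
    show max (slicingDist σ.slicing τ.slicing) (ENNReal.ofReal ‖σ.Z - τ.Z‖) =
      max (slicingDist τ.slicing σ.slicing) (ENNReal.ofReal ‖τ.Z - σ.Z‖)
    have h1 : slicingDist σ.slicing τ.slicing = slicingDist τ.slicing σ.slicing := by
      unfold slicingDist
      refine iSup_congr fun X => ?_
      rw [abs_sub_comm (Slicing.maxPhase σ.slicing X) (Slicing.maxPhase τ.slicing X),
        abs_sub_comm (Slicing.minPhase σ.slicing X) (Slicing.minPhase τ.slicing X)]
    rw [h1, norm_sub_rev]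
  edist_triangle σ τ ρ := by
    show max (slicingDist σ.slicing ρ.slicing) (ENNReal.ofReal ‖σ.Z - ρ.Z‖) ≤
      max (slicingDist σ.slicing τ.slicing) (ENNReal.ofReal ‖σ.Z - τ.Z‖) +
      max (slicingDist τ.slicing ρ.slicing) (ENNReal.ofReal ‖τ.Z - ρ.Z‖)
    apply max_le
    · have h1 : slicingDist σ.slicing ρ.slicing ≤
          slicingDist σ.slicing τ.slicing + slicingDist τ.slicing ρ.slicing := by
        unfold slicingDist
        refine iSup_le fun X => ?_
        have hre : max |Slicing.maxPhase σ.slicing X - Slicing.maxPhase ρ.slicing X|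
              |Slicing.minPhase σ.slicing X - Slicing.minPhase ρ.slicing X| ≤
            (max |Slicing.maxPhase σ.slicing X - Slicing.maxPhase τ.slicing X|
              |Slicing.minPhase σ.slicing X - Slicing.minPhase τ.slicing X|) +
            (max |Slicing.maxPhase τ.slicing X - Slicing.maxPhase ρ.slicing X|
              |Slicing.minPhase τ.slicing X - Slicing.minPhase ρ.slicing X|) := by
          apply max_le
          · exact (abs_sub_le _ _ _).trans (add_le_add (le_max_left _ _) (le_max_left _ _))
          · exact (abs_sub_le _ _ _).trans (add_le_add (le_max_right _ _) (le_max_right _ _))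
        refine le_trans (ENNReal.ofReal_le_ofReal hre) ?_
        refine le_trans ENNReal.ofReal_add_le ?_
        refine add_le_add ?_ ?_
        · exact le_iSup (fun Y : C => ENNReal.ofReal
            (max |Slicing.maxPhase σ.slicing Y - Slicing.maxPhase τ.slicing Y|
              |Slicing.minPhase σ.slicing Y - Slicing.minPhase τ.slicing Y|)) X
        · exact le_iSup (fun Y : C => ENNReal.ofReal
            (max |Slicing.maxPhase τ.slicing Y - Slicing.maxPhase ρ.slicing Y|
              |Slicing.minPhase τ.slicing Y - Slicing.minPhase ρ.slicing Y|)) X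
      exact h1.trans (add_le_add (le_max_left _ _) (le_max_left _ _))
    · have h2 : ENNReal.ofReal ‖σ.Z - ρ.Z‖ ≤
          ENNReal.ofReal ‖σ.Z - τ.Z‖ + ENNReal.ofReal ‖τ.Z - ρ.Z‖ := by
        refine le_trans (ENNReal.ofReal_le_ofReal ?_) ENNReal.ofReal_add_le
        have := dist_triangle σ.Z τ.Z ρ.Z
        simpa [dist_eq_norm] using this
      exact h2.trans (add_le_add (le_max_right _ _) (le_max_right _ _))

/-- The set of classical stability conditions on the subcategory `N` (charge factoring
through `v`), as a subset of the space of lax pre-stability conditions. -/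
def StabSet (N : Set C) (vd : ChargeData C E) : Set (LaxPreStab C E N vd) :=
  {σ | σ.IsClassical ∧ σ.HasSupport}

/-- The space of lax stability conditions: lax pre-stability conditions satisfying the
support property and lying in the closure of the space of classical stability conditions. -/
def StabL (N : Set C) (vd : ChargeData C E) : Set (LaxPreStab C E N vd) :=
  {σ | σ.HasSupport ∧ σ ∈ closure (StabSet N vd)}

/-- Lax stability conditions with massless subcategory exactly `M`. -/
def StabLN (N : Set C) (vd : ChargeData C E) (M : Set C) : Set (LaxPreStab C E N vd) :=
  {σ | σ ∈ StabL N vd ∧ σ.massless = M}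

/-- `τ ∈ B_ε(σ)`. -/
def memB {N : Set C} {vd : ChargeData C E} (σ τ : LaxPreStab C E N vd) (ε : ℝ) : Prop :=
  slicingDist σ.slicing τ.slicing < ENNReal.ofReal ε ∧
  σ.seminorm (τ.Z - σ.Z) < ENNReal.ofReal (Real.sin (Real.pi * ε))

/-- `Λ_N ⊗ ℝ`: the (real span of the) saturation of the image of `K(N)` in `Λ`. -/
def chargeSpan (vd : ChargeData C E) (N : Set C) : Submodule ℝ E :=
  Submodule.span ℝ (vd.v '' N)

/-- `W ↦ W_N`: restriction of a charge to `Λ_N`, viewed in `Hom(Λ, ℂ)` via the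
orthogonal splitting. -/
noncomputable def restrictCharge (K : Submodule ℝ E) (W : E →L[ℝ] ℂ) : E →L[ℝ] ℂ :=
  W.comp (K.subtypeL.comp (Submodule.orthogonalProjectionOnto K))

variable (C) in
/-- The charge data `v_N : K(N) → Λ_N` for a thick subcategory `N`. -/
noncomputable def chargeDataOn (vd : ChargeData C E) (N : Set C) :
    ChargeData C ↥(chargeSpan vd N) where
  v X := Submodule.orthogonalProjectionOnto (chargeSpan vd N) (vd.v X)
  additive T hT := by simp only [vd.additive T hT, map_add]

/-- The image in the quotient of the slices of a slicing:
`P_{C/N}(φ)` is the isomorphism closure of `P(φ)` in `C/N`. -/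
def QuotSlices {D : Type u₂} [Category.{v₂} D] (F : C ⥤ D) (P : ℝ → Set C) (φ : ℝ) :
    Set D :=
  {d | ∃ c ∈ P φ, Nonempty (d ≅ F.obj c)}

/-- Essential image of `N` under the quotient functor, i.e. `N/M ⊆ C/M`. -/
def quotImage {D : Type u₂} [Category.{v₂} D] (F : C ⥤ D) (N : Set C) : Set D :=
  {d | ∃ c ∈ N, Nonempty (d ≅ F.obj c)}

/-- Compatibility of a slicing of `C` with a pair of slicings of `N` and of `C/N`. -/
def Compatible {D : Type u₂} [Category.{v₂} D] [Preadditive D] [HasZeroObject D]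
    [HasShift D ℤ] [∀ n : ℤ, (shiftFunctor D n).Additive] [Pretriangulated D]
    (F : C ⥤ D) {N : Set C}
    (S : Slicing C Set.univ) (SN : Slicing C N) (SQ : Slicing D Set.univ) : Prop :=
  (∀ φ : ℝ, SN.P φ ⊆ S.P φ) ∧ ∀ (φ : ℝ) (X : C), X ∈ S.P φ → F.obj X ∈ SQ.P φ

/-- A slicing is well-adapted to `N` if it is adapted to it and the quotient
slicing on `C/N` is locally finite. -/
def WellAdapted {D : Type u₂} [Category.{v₂} D] [Preadditive D] [HasZeroObject D]
    [HasShift D ℤ] [∀ n : ℤ, (shiftFunctor D n).Additive] [Pretriangulated D]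
    (F : C ⥤ D) (S : Slicing C Set.univ) (N : Set C) : Prop :=
  S.IsAdapted N ∧ ∃ SQ : Slicing D Set.univ,
    (∀ φ : ℝ, SQ.P φ = QuotSlices F S.P φ) ∧ SQ.LocallyFinite

/-- Support propagates from `σ` (with massless subcategory `N`) with constant `ε`. -/
def SupportPropagatesAt (vd : ChargeData C E) (N : Set C)
    (σ : LaxPreStab C E Set.univ vd) (ε : ℝ) : Prop :=
  ∀ τ : LaxPreStab C E Set.univ vd, memB σ τ ε →
    σ.seminorm (σ.Z - (τ.Z - restrictCharge (chargeSpan vd N) τ.Z)) <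
      ENNReal.ofReal (Real.sin (Real.pi * ε)) →
    (∃ τN : LaxPreStab C ↥(chargeSpan vd N) N (chargeDataOn C vd N),
        (∀ φ : ℝ, τN.slicing.P φ = τ.slicing.P φ ∩ N) ∧
        (∀ x : ↥(chargeSpan vd N), τN.Z x = τ.Z ↑x) ∧
        τN ∈ StabL N (chargeDataOn C vd N)) →
    τ ∈ StabL Set.univ vd

/-- Support propagates from `Stab_{l,N}(C)`: uniformly on each connected component. -/
def SupportPropagatesFrom (vd : ChargeData C E) (N : Set C) : Prop :=
  ∀ σ ∈ StabLN Set.univ vd N, ∃ ε > (0 : ℝ),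
    ∀ σ' ∈ connectedComponentIn (StabLN Set.univ vd N) σ, SupportPropagatesAt vd N σ' ε

/-- `f` is a homeomorphism onto its image, which is a union of connected components. -/
def IsHomeoOntoComponents {α : Type*} {β : Type*} [TopologicalSpace α]
    [TopologicalSpace β] (f : α → β) : Prop :=
  Continuous f ∧ Function.Injective f ∧
  (∀ U : Set α, IsOpen U → ∃ V : Set β, IsOpen V ∧ f '' U = V ∩ Set.range f) ∧
  (∀ x ∈ Set.range f, connectedComponent x ⊆ Set.range f)

/-- The equivalence relation on lax stability conditions defining the space of
quotient stability conditions: same charge and same connected component of the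
fibre of the charge map. -/
def qRel (vd : ChargeData C E) :
    ↥(StabL (C := C) Set.univ vd) → ↥(StabL (C := C) Set.univ vd) → Prop :=
  fun σ τ => σ.1.Z = τ.1.Z ∧
    τ ∈ connectedComponentIn {ρ : ↥(StabL (C := C) Set.univ vd) | ρ.1.Z = σ.1.Z} σ

/-- The space of quotient stability conditions, with the quotient topology. -/
def QStab (vd : ChargeData C E) : Type _ := Quot (qRel vd)

noncomputable instance (vd : ChargeData C E) : TopologicalSpace (QStab vd) :=
  inferInstanceAs (TopologicalSpace (Quot _))

/-- The stratum of quotient stability conditions with massless subcategory `N`. -/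
def QStabN (vd : ChargeData C E) (N : Set C) : Set (QStab vd) :=
  {q | ∃ σ : ↥(StabL (C := C) Set.univ vd), σ.1 ∈ StabLN Set.univ vd N ∧ Quot.mk _ σ = q}

/-- The charge map on the space of quotient stability conditions. -/
def qCharge (vd : ChargeData C E) : QStab vd → (E →L[ℝ] ℂ) :=
  Quot.lift (fun σ => σ.1.Z) (fun _ _ h => h.1)

omit [HasZeroObject C] [∀ n : ℤ, (shiftFunctor C n).Additive] [Pretriangulated C] in
lemma forall_hom_shift_eq_zero_iff {s t : C} :
    (∀ g : s⟦(1 : ℤ)⟧ ⟶ t, g = 0) ↔ ∀ f : s ⟶ t⟦(-1 : ℤ)⟧, f = 0 := by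
  simp only [← subsingleton_iff_forall_eq]
  exact ((shiftEquiv C (1 : ℤ)).toAdjunction.homEquiv s t).subsingleton_congr

section DistinguishedTriangle

variable {T : Triangle C} {s t : C}

lemma eq_zero_of_comp_mor₂_eq_zero (hT : T ∈ distTriang C)
    (hs : ∀ g : s ⟶ T.obj₁, g = 0) (f : s ⟶ T.obj₂) (hf : f ≫ T.mor₂ = 0) : f = 0 := by
  obtain ⟨g, rfl⟩ := Triangle.coyoneda_exact₂ _ hT f hf
  rw [hs g, zero_comp]

lemma eq_zero_of_comp_mor₁_eq_zero (hT : T ∈ distTriang C)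
    (hs : ∀ g : s ⟶ T.obj₃⟦(-1 : ℤ)⟧, g = 0) (f : s ⟶ T.obj₁) (hf : f ≫ T.mor₁ = 0) :
    f = 0 := by
  obtain ⟨g, rfl⟩ := Triangle.coyoneda_exact₂ _ (inv_rot_of_distTriang _ hT) f hf
  rw [show g = 0 from hs g]
  exact zero_comp

lemma eq_zero_of_mor₁_comp_eq_zero (hT : T ∈ distTriang C)
    (ht : ∀ g : T.obj₃ ⟶ t, g = 0) (f : T.obj₂ ⟶ t) (hf : T.mor₁ ≫ f = 0) : f = 0 := by
  obtain ⟨g, rfl⟩ := Triangle.yoneda_exact₂ _ hT f hf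
  rw [ht g, comp_zero]

end DistinguishedTriangle

section TriangleAdditive

variable {M : Type*} [AddCommGroup M]

def IsTriangleAdditive (f : C → M) : Prop :=
  ∀ T ∈ distTriang C, f T.obj₂ = f T.obj₁ + f T.obj₃

namespace IsTriangleAdditive

open ZeroObject

variable {f : C → M}

lemma map_zero (hf : IsTriangleAdditive f) : f 0 = 0 := by
  simpa using hf _ (contractible_distinguished (0 : C))

lemma map_iso (hf : IsTriangleAdditive f) {A B : C} (e : A ≅ B) : f A = f B := by
  have hT : Triangle.mk e.hom (0 : B ⟶ 0) 0 ∈ distTriang C :=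
    isomorphic_distinguished _ (contractible_distinguished A) _
      (Triangle.isoMk _ _ (Iso.refl A) e.symm (Iso.refl 0)
        (e.hom_inv_id.trans (Category.comp_id _).symm) (zero_comp.trans comp_zero.symm)
        (zero_comp.trans comp_zero.symm))
  simpa [hf.map_zero] using (hf _ hT).symm

lemma map_isZero (hf : IsTriangleAdditive f) {A : C} (h : IsZero A) : f A = 0 :=
  (hf.map_iso h.isoZero).trans hf.map_zero

end IsTriangleAdditive

end TriangleAdditive

namespace HNFiltration

open ZeroObject

variable {P : ℝ → Set C} {X : C} (F : HNFiltration C P X)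

def objN (k : ℕ) (hk : k ≤ F.n) : C := F.obj ⟨k, Nat.lt_succ_of_le hk⟩

def stepMap (k : ℕ) (hk : k < F.n) : F.objN k hk.le ⟶ F.objN (k + 1) hk := F.map ⟨k, hk⟩

lemma isZero_objN_zero : IsZero (F.objN 0 (Nat.zero_le _)) := F.isZero_zero

lemma objN_last : F.objN F.n le_rfl = X := F.last_eq

def stepFactor (k : ℕ) (hk : k < F.n) : F.objN (k + 1) hk ⟶ F.factor ⟨k, hk⟩ :=
  F.toFactor ⟨k, hk⟩

def stepShift (k : ℕ) (hk : k < F.n) : F.factor ⟨k, hk⟩ ⟶ (F.objN k hk.le)⟦(1 : ℤ)⟧ :=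
  F.toShift ⟨k, hk⟩

lemma step_distinguished (k : ℕ) (hk : k < F.n) :
    Triangle.mk (F.stepMap k hk) (F.stepFactor k hk) (F.stepShift k hk) ∈ distTriang C :=
  F.distinguished ⟨k, hk⟩

lemma obj_succ_last (hn : 0 < F.n) : F.obj (⟨F.n - 1, by omega⟩ : Fin F.n).succ = X := by
  have hlast : (⟨F.n - 1, by omega⟩ : Fin F.n).succ = Fin.last F.n := by
    ext
    simp only [Fin.val_succ, Fin.val_last]
    omega
  rw [hlast, F.last_eq]

def toTop : ∀ (k : ℕ) (hk : k ≤ F.n), F.objN k hk ⟶ X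
  | k, hk =>
    if h : k = F.n then eqToHom (by subst h; exact F.objN_last)
    else F.stepMap k (by omega) ≫ toTop (k + 1) (by omega)
  termination_by k => F.n - k

lemma toTop_eq_step (k : ℕ) (hk : k < F.n) :
    F.toTop k hk.le = F.stepMap k hk ≫ F.toTop (k + 1) hk := by
  rw [toTop, dif_neg (by omega)]

lemma toTop_last : F.toTop F.n le_rfl = eqToHom F.objN_last := by
  rw [toTop, dif_pos rfl]

def ofIsZero (hX : IsZero X) : HNFiltration C P X where
  n := 0
  obj := fun _ => X
  isZero_zero := hX
  last_eq := rfl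
  map := Fin.elim0
  factor := Fin.elim0
  phase := Fin.elim0
  phase_anti := fun i => Fin.elim0 i
  factor_nonzero := fun i => Fin.elim0 i
  factor_mem := fun i => Fin.elim0 i
  toFactor := fun i => Fin.elim0 i
  toShift := fun i => Fin.elim0 i
  distinguished := fun i => Fin.elim0 i

noncomputable def single {ψ : ℝ} (hX : X ∈ P ψ) (hX0 : ¬IsZero X) : HNFiltration C P X where
  n := 1
  obj := Fin.cons 0 fun _ => X
  isZero_zero := Limits.isZero_zero C
  last_eq := rfl
  map := fun _ => 0
  factor := fun _ => X
  phase := fun _ => ψ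
  phase_anti := fun i j h => absurd h (by omega)
  factor_nonzero := fun _ => hX0
  factor_mem := fun _ => hX
  toFactor := fun _ => 𝟙 X
  toShift := fun _ => 0
  distinguished := fun i => by
    obtain rfl := Subsingleton.elim i 0
    exact contractible_distinguished₁ X

def trunc (m : ℕ) (hm : m ≤ F.n) : HNFiltration C P (F.objN m hm) where
  n := m
  obj := fun j => F.obj ⟨j, by omega⟩
  isZero_zero := F.isZero_zero
  last_eq := rfl
  map := fun i => F.map ⟨i, by omega⟩
  factor := fun i => F.factor ⟨i, by omega⟩
  phase := fun i => F.phase ⟨i, by omega⟩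
  phase_anti := fun _ _ h => F.phase_anti _ _ h
  factor_nonzero := fun _ => F.factor_nonzero _
  factor_mem := fun _ => F.factor_mem _
  toFactor := fun i => F.toFactor ⟨i, by omega⟩
  toShift := fun i => F.toShift ⟨i, by omega⟩
  distinguished := fun i => F.distinguished ⟨i, by omega⟩

end HNFiltration

section TriangleAdditive

variable {M : Type*} [AddCommGroup M] {f : C → M} {P : ℝ → Set C} {X : C}

lemma IsTriangleAdditive.map_objN_succ (hf : IsTriangleAdditive f) (F : HNFiltration C P X)
    (k : ℕ) (hk : k < F.n) :
    f (F.objN (k + 1) hk) = f (F.objN k hk.le) + f (F.factor ⟨k, hk⟩) :=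
  hf _ (F.step_distinguished k hk)

lemma IsTriangleAdditive.map_objN (hf : IsTriangleAdditive f) (F : HNFiltration C P X) :
    ∀ (k : ℕ) (hk : k ≤ F.n),
      f (F.objN k hk) = ∑ i ∈ Finset.univ.filter (fun i : Fin F.n => (i : ℕ) < k), f (F.factor i)
  | 0, hk => by simp [hf.map_isZero F.isZero_objN_zero]
  | k + 1, hk => by
    have hsplit : Finset.univ.filter (fun i : Fin F.n => (i : ℕ) < k + 1) =
        insert ⟨k, hk⟩ (Finset.univ.filter fun i : Fin F.n => (i : ℕ) < k) := by
      ext i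
      simp only [Finset.mem_filter, Finset.mem_univ, true_and, Finset.mem_insert, Fin.ext_iff]
      omega
    rw [hf.map_objN_succ F k hk, hsplit, Finset.sum_insert (by simp),
      hf.map_objN F k (by omega), add_comm]

lemma IsTriangleAdditive.map_eq_sum (hf : IsTriangleAdditive f) (F : HNFiltration C P X) :
    f X = ∑ i, f (F.factor i) := by
  simpa [F.objN_last] using hf.map_objN F F.n le_rfl

end TriangleAdditive

section HomVanishing

variable {N : Set C} {S : Slicing C N} {X s : C} {c : ℝ}

variable (S) in
/-- `s ∈ P(≥ c)`, expressed through Hom-orthogonality to all slices of phase `< c`. -/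
def Slicing.HomVanishBelow (c : ℝ) (s : C) : Prop :=
  ∀ ⦃t : C⦄ ⦃ρ : ℝ⦄, t ∈ S.P ρ → ρ < c → ∀ f : s ⟶ t, f = 0

lemma Slicing.mem_P_shift_neg_one {t : C} {ρ : ℝ} (ht : t ∈ S.P ρ) :
    t⟦(-1 : ℤ)⟧ ∈ S.P (ρ - 1) := by
  rw [← S.shift_mem, sub_add_cancel]
  exact ht

namespace Slicing.HomVanishBelow

lemma mono {c' : ℝ} (h : S.HomVanishBelow c' s) (hc : c ≤ c') : S.HomVanishBelow c s :=
  fun _ _ ht hρ => h ht (hρ.trans_le hc)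

lemma shift (h : S.HomVanishBelow c s) : S.HomVanishBelow (c + 1) (s⟦(1 : ℤ)⟧) :=
  fun _ _ ht hρ => forall_hom_shift_eq_zero_iff.2 (h (S.mem_P_shift_neg_one ht) (by linarith))

lemma hom_objN_eq_zero (h : S.HomVanishBelow c s) (F : HNFiltration C S.P X) :
    ∀ (k : ℕ) (hk : k ≤ F.n), (∀ i : Fin F.n, (i : ℕ) < k → F.phase i < c) →
      ∀ f : s ⟶ F.objN k hk, f = 0
  | 0, hk, _, f => F.isZero_objN_zero.eq_of_tgt f 0
  | k + 1, hk, hF, f =>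
    eq_zero_of_comp_mor₂_eq_zero (F.step_distinguished k hk)
      (hom_objN_eq_zero h F k (by omega) fun i hi => hF i (by omega)) f
      (h (F.factor_mem _) (hF ⟨k, hk⟩ k.lt_succ_self) _)

lemma hom_eq_zero (h : S.HomVanishBelow c s) (F : HNFiltration C S.P X)
    (hF : ∀ i, F.phase i < c) : ∀ f : s ⟶ X, f = 0 :=
  F.objN_last ▸ h.hom_objN_eq_zero F F.n le_rfl fun i _ => hF i

lemma hom_shift_eq_zero (h : S.HomVanishBelow c s) (F : HNFiltration C S.P X)
    (hF : ∀ i, F.phase i < c) : ∀ f : s ⟶ X⟦(-1 : ℤ)⟧, f = 0 :=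
  forall_hom_shift_eq_zero_iff.1 ((h.shift.mono (by linarith)).hom_eq_zero F hF)

lemma exists_lift_toTop (h : S.HomVanishBelow c s) (F : HNFiltration C S.P X) :
    ∀ (k : ℕ) (hk : k ≤ F.n), (∀ i : Fin F.n, k ≤ (i : ℕ) → F.phase i < c) →
      ∀ f : s ⟶ X, ∃ g : s ⟶ F.objN k hk, g ≫ F.toTop k hk = f
  | k, hk, hF, f => by
    by_cases hkn : k = F.n
    · subst hkn
      exact ⟨f ≫ eqToHom F.objN_last.symm, by simp [F.toTop_last]⟩
    · have hk' : k < F.n := by omega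
      obtain ⟨g', rfl⟩ := exists_lift_toTop h F (k + 1) hk' (fun i hi => hF i (by omega)) f
      obtain ⟨g, rfl⟩ : ∃ g : s ⟶ F.objN k hk, g' = g ≫ F.stepMap k hk' :=
        Triangle.coyoneda_exact₂ _ (F.step_distinguished k hk') g'
          (h (F.factor_mem _) (hF ⟨k, hk'⟩ le_rfl) _)
      exact ⟨g, by rw [F.toTop_eq_step k hk', Category.assoc]⟩
  termination_by k => F.n - k

lemma eq_zero_of_comp_toTop (h : S.HomVanishBelow c s) (F : HNFiltration C S.P X) :
    ∀ (k : ℕ) (hk : k ≤ F.n), (∀ i : Fin F.n, k ≤ (i : ℕ) → F.phase i < c) →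
      ∀ e : s ⟶ F.objN k hk, e ≫ F.toTop k hk = 0 → e = 0
  | k, hk, hF, e, he => by
    by_cases hkn : k = F.n
    · subst hkn
      simpa [F.toTop_last] using he
    · have hk' : k < F.n := by omega
      rw [F.toTop_eq_step k hk', ← Category.assoc] at he
      exact eq_zero_of_comp_mor₁_eq_zero (F.step_distinguished k hk')
        (h (S.mem_P_shift_neg_one (F.factor_mem _)) (by linarith [hF ⟨k, hk'⟩ le_rfl])) e
        (eq_zero_of_comp_toTop h F (k + 1) hk' (fun i hi => hF i (by omega)) _ he)
  termination_by k => F.n - k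

end Slicing.HomVanishBelow

namespace HNFiltration

variable (F : HNFiltration C S.P X)

lemma homVanishBelow_objN : ∀ (k : ℕ) (hk : k ≤ F.n),
    (∀ i : Fin F.n, (i : ℕ) < k → c ≤ F.phase i) → S.HomVanishBelow c (F.objN k hk)
  | 0, hk, _ => fun _ _ _ _ f => F.isZero_objN_zero.eq_of_src f 0
  | k + 1, hk, hF => fun _ _ ht hρ f =>
    eq_zero_of_mor₁_comp_eq_zero (F.step_distinguished k hk)
      (S.hom_orth (hρ.trans_le (hF ⟨k, hk⟩ k.lt_succ_self)) (F.factor_mem _) ht) f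
      (homVanishBelow_objN k (by omega) (fun i hi => hF i (by omega)) ht hρ _)

lemma homVanishBelow (hF : ∀ i, c ≤ F.phase i) : S.HomVanishBelow c X :=
  F.objN_last ▸ F.homVanishBelow_objN F.n le_rfl fun i _ => hF i

end HNFiltration

end HomVanishing

section PhaseUniqueness

variable {N : Set C} {S : Slicing C N} {X : C}

namespace HNFiltration

variable (F : HNFiltration C S.P X)

lemma strictAnti_phase : StrictAnti F.phase := F.phase_anti

lemma phase_le_phase_zero (hn : 0 < F.n) (i : Fin F.n) : F.phase i ≤ F.phase ⟨0, hn⟩ :=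
  F.strictAnti_phase.antitone (Nat.zero_le _)

lemma phase_last_le (hn : 0 < F.n) (i : Fin F.n) : F.phase ⟨F.n - 1, by omega⟩ ≤ F.phase i :=
  F.strictAnti_phase.antitone (Nat.le_sub_one_of_lt i.2)

lemma toFactor_ne_zero (k : Fin F.n) : F.toFactor k ≠ 0 := by
  intro h0
  obtain ⟨g, hg⟩ := Triangle.yoneda_exact₃ _ (F.distinguished k) (𝟙 _)
    (by simp only [Triangle.mk_mor₂, h0]; exact zero_comp)
  have hvan : S.HomVanishBelow (F.phase k) (F.objN k k.2.le) :=
    F.homVanishBelow_objN k k.2.le fun i hi => (F.phase_anti i k hi).le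
  rw [show g = 0 from hvan.shift (F.factor_mem k) (by linarith) g, comp_zero] at hg
  exact F.factor_nonzero k ((IsZero.iff_id_eq_zero _).2 hg)

lemma not_isZero (hn : 0 < F.n) : ¬IsZero X := fun hX =>
  F.toFactor_ne_zero ⟨F.n - 1, by omega⟩ (IsZero.eq_of_src ((F.obj_succ_last hn).symm ▸ hX) _ _)

lemma n_pos (hX : ¬IsZero X) : 0 < F.n := by
  by_contra h
  have hlast : Fin.last F.n = 0 := by
    ext
    simp only [Fin.val_last, Fin.val_zero]
    omega
  exact hX (F.last_eq ▸ hlast ▸ F.isZero_zero)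

end HNFiltration

lemma HNFiltration.phase_zero_le_phase_zero (F G : HNFiltration C S.P X) (hF : 0 < F.n)
    (hG : 0 < G.n) :
    G.phase ⟨0, hG⟩ ≤ F.phase ⟨0, hF⟩ := by
  by_contra hlt
  rw [not_le] at hlt
  have hs : S.HomVanishBelow (G.phase ⟨0, hG⟩) (G.objN 1 hG) :=
    G.homVanishBelow_objN 1 hG fun i hi => G.strictAnti_phase.antitone (Nat.le_of_lt_succ hi)
  have hzero : G.toTop 1 hG = 0 :=
    hs.hom_eq_zero F (fun i => (F.phase_le_phase_zero hF i).trans_lt hlt) _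
  have hid : 𝟙 (G.objN 1 hG) = 0 :=
    hs.eq_zero_of_comp_toTop G 1 hG (fun i hi => G.phase_anti ⟨0, hG⟩ i hi) _
      (by rw [Category.id_comp, hzero])
  exact G.factor_nonzero ⟨0, hG⟩ (Triangle.isZero₃_of_isZero₁₂ _ (G.step_distinguished 0 hG)
    G.isZero_objN_zero ((IsZero.iff_id_eq_zero _).2 hid))

lemma HNFiltration.phase_last_le_phase_last (F G : HNFiltration C S.P X) (hF : 0 < F.n)
    (hG : 0 < G.n) : F.phase ⟨F.n - 1, by omega⟩ ≤ G.phase ⟨G.n - 1, by omega⟩ := by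
  by_contra hlt
  have hs : S.HomVanishBelow (F.phase ⟨F.n - 1, by omega⟩)
      (G.obj (⟨G.n - 1, by omega⟩ : Fin G.n).succ) :=
    (G.obj_succ_last hG).symm ▸ F.homVanishBelow (F.phase_last_le hF)
  exact G.toFactor_ne_zero _ (hs (G.factor_mem _) (lt_of_not_ge hlt) _)

lemma HNFiltration.maxPhase_eq (F : HNFiltration C S.P X) (hX : X ∈ N) (hF : 0 < F.n) :
    S.maxPhase X = F.phase ⟨0, hF⟩ := by
  have hX0 := F.not_isZero hF
  rw [Slicing.maxPhase, dif_pos ⟨hX, hX0⟩]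
  set G := (S.hn X hX hX0).some
  have hG := G.n_pos hX0
  have : Nonempty (Fin G.n) := ⟨⟨0, hG⟩⟩
  rw [le_antisymm (ciSup_le (G.phase_le_phase_zero hG)) (le_ciSup (Set.finite_range _).bddAbove _)]
  exact le_antisymm (F.phase_zero_le_phase_zero G hF hG) (G.phase_zero_le_phase_zero F hG hF)

lemma HNFiltration.minPhase_eq (F : HNFiltration C S.P X) (hX : X ∈ N) (hF : 0 < F.n) :
    S.minPhase X = F.phase ⟨F.n - 1, by omega⟩ := by
  have hX0 := F.not_isZero hF
  rw [Slicing.minPhase, dif_pos ⟨hX, hX0⟩]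
  set G := (S.hn X hX hX0).some
  have hG := G.n_pos hX0
  have : Nonempty (Fin G.n) := ⟨⟨0, hG⟩⟩
  rw [le_antisymm (ciInf_le (Set.finite_range _).bddBelow _) (le_ciInf (G.phase_last_le hG))]
  exact le_antisymm (G.phase_last_le_phase_last F hG hF) (F.phase_last_le_phase_last G hF hG)

end PhaseUniqueness

lemma abs_phase_sub_lt_of_slicingDist_lt {N : Set C} {S Q : Slicing C N} {δ : ℝ}
    (h : slicingDist S Q < ENNReal.ofReal δ) (X : C) :
    |S.maxPhase X - Q.maxPhase X| < δ ∧ |S.minPhase X - Q.minPhase X| < δ := by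
  have hX := (le_iSup (fun X : C => ENNReal.ofReal
    (max |S.maxPhase X - Q.maxPhase X| |S.minPhase X - Q.minPhase X|)) X).trans_lt h
  rw [ENNReal.ofReal_lt_ofReal_iff'] at hX
  exact max_lt_iff.1 hX.1

lemma phase_mem_Ioo_of_slicingDist_lt {N : Set C} {S Q : Slicing C N} {δ lo hi : ℝ}
    (h : slicingDist S Q < ENNReal.ofReal δ) {X : C} (hX : X ∈ N)
    (F : HNFiltration C S.P X) (FQ : HNFiltration C Q.P X)
    (hlo : ∀ i, lo ≤ FQ.phase i) (hhi : ∀ i, FQ.phase i ≤ hi) (j : Fin F.n) :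
    F.phase j ∈ Set.Ioo (lo - δ) (hi + δ) := by
  have hF : 0 < F.n := j.pos
  have hQ : 0 < FQ.n := FQ.n_pos (F.not_isZero hF)
  obtain ⟨hmax, hmin⟩ := abs_phase_sub_lt_of_slicingDist_lt h X
  rw [F.maxPhase_eq hX hF, FQ.maxPhase_eq hX hQ, abs_lt] at hmax
  rw [F.minPhase_eq hX hF, FQ.minPhase_eq hX hQ, abs_lt] at hmin
  have := F.phase_le_phase_zero hF j
  have := F.phase_last_le hF j
  have := hlo ⟨FQ.n - 1, by omega⟩
  have := hhi ⟨0, hQ⟩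
  constructor <;> linarith

lemma sum_eq_zero_iff_of_phase_mem_Ioo {ι : Type*} (s : Finset ι) (z : ι → ℂ) (φ : ι → ℝ)
    {a : ℝ} (hz : ∀ i ∈ s, ∃ m : ℝ, 0 ≤ m ∧ z i = m * Complex.exp (↑(Real.pi * φ i) * Complex.I))
    (hφ : ∀ i ∈ s, z i ≠ 0 → φ i ∈ Set.Ioo a (a + 1)) :
    ∑ i ∈ s, z i = 0 ↔ ∀ i ∈ s, z i = 0 := by
  -- multiplication by `w` turns the phase interval `(a, a + 1)` into the open right half-plane
  set w : ℂ := Complex.exp (↑(-(Real.pi * (a + 1 / 2))) * Complex.I)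
  have hpos : ∀ i ∈ s, z i ≠ 0 → 0 < (w * z i).re := by
    intro i hi hzi
    obtain ⟨m, hm, hmz⟩ := hz i hi
    obtain ⟨hlo, hhi⟩ := hφ i hi hzi
    have hm0 : 0 < m := hm.lt_of_ne (by rintro rfl; simp [hmz] at hzi)
    have hre : (w * z i).re = m * Real.cos (Real.pi * (φ i - (a + 1 / 2))) := by
      rw [hmz, mul_left_comm, ← Complex.exp_add, ← add_mul, ← Complex.ofReal_add,
        Complex.re_ofReal_mul, Complex.exp_ofReal_mul_I_re]
      ring_nf
    rw [hre]
    refine mul_pos hm0 (Real.cos_pos_of_mem_Ioo ⟨?_, ?_⟩) <;> nlinarith [Real.pi_pos]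
  have hnonneg : ∀ i ∈ s, 0 ≤ (w * z i).re := fun i hi => by
    by_cases hzi : z i = 0
    · simp [hzi]
    · exact (hpos i hi hzi).le
  refine ⟨fun hsum i hi => ?_, Finset.sum_eq_zero⟩
  have hre : ∑ i ∈ s, (w * z i).re = 0 := by
    rw [← Complex.re_sum, ← Finset.mul_sum, hsum, mul_zero, Complex.zero_re]
  by_contra hzi
  exact (hpos i hi hzi).ne' ((Finset.sum_eq_zero_iff_of_nonneg hnonneg).1 hre i hi)

lemma exists_cut_index {n : ℕ} {φ : Fin n → ℝ} (hφ : StrictAnti φ) (c : ℝ) :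
    ∃ k ≤ n, ∀ i : Fin n, (i : ℕ) < k ↔ c ≤ φ i := by
  classical
  have hex : ∃ k, k = n ∨ ∃ h : k < n, φ ⟨k, h⟩ < c := ⟨n, Or.inl rfl⟩
  refine ⟨Nat.find hex, Nat.find_min' hex (Or.inl rfl), fun i => ⟨fun hi => ?_, fun hi => ?_⟩⟩
  · exact not_lt.1 fun hlt => Nat.find_min hex hi (Or.inr ⟨i.2, hlt⟩)
  · by_contra hge
    rcases Nat.find_spec hex with h | ⟨hk, hlt⟩
    · omega
    · exact (hφ.antitone (not_lt.1 hge : (⟨_, hk⟩ : Fin n) ≤ i)).trans_lt hlt |>.not_ge hi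

section Truncation

variable {N : Set C} {S : Slicing C N}

lemma HNFiltration.phase_lt_of_cut {X : C} (F : HNFiltration C S.P X) {c : ℝ} {k : ℕ}
    (hk : ∀ i : Fin F.n, (i : ℕ) < k ↔ c ≤ F.phase i) (i : Fin F.n) (hi : k ≤ (i : ℕ)) :
    F.phase i < c :=
  lt_of_not_ge fun h => absurd ((hk i).2 h) (not_lt.2 hi)

lemma nonempty_iso_objN_of_distTriang {T : Triangle C} (hT : T ∈ distTriang C)
    (G : HNFiltration C S.P T.obj₁) (F : HNFiltration C S.P T.obj₂)
    (H : HNFiltration C S.P T.obj₃) {c : ℝ} (hH : ∀ j, H.phase j < c)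
    {k : ℕ} (hk : k ≤ G.n) (hGk : ∀ j : Fin G.n, (j : ℕ) < k ↔ c ≤ G.phase j)
    {l : ℕ} (hl : l ≤ F.n) (hFl : ∀ i : Fin F.n, (i : ℕ) < l ↔ c ≤ F.phase i) :
    Nonempty (G.objN k hk ≅ F.objN l hl) := by
  have hA : S.HomVanishBelow c (G.objN k hk) := G.homVanishBelow_objN k hk fun j => (hGk j).1
  have hX : S.HomVanishBelow c (F.objN l hl) := F.homVanishBelow_objN l hl fun i => (hFl i).1
  -- `α` and `β` lift `G_{≥c} → T.obj₂` and `F_{≥c} → T.obj₁` through the truncations;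
  -- since such lifts are unique, they are mutually inverse.
  obtain ⟨α, hα⟩ := hA.exists_lift_toTop F l hl (F.phase_lt_of_cut hFl) (G.toTop k hk ≫ T.mor₁)
  obtain ⟨γ, hγ⟩ := Triangle.coyoneda_exact₂ _ hT (F.toTop l hl) (hX.hom_eq_zero H hH _)
  obtain ⟨β, rfl⟩ := hX.exists_lift_toTop G k hk (G.phase_lt_of_cut hGk) γ
  have hβ : β ≫ G.toTop k hk ≫ T.mor₁ = F.toTop l hl := by rw [hγ, Category.assoc]
  refine ⟨⟨α, β, ?_, ?_⟩⟩
  · rw [← sub_eq_zero]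
    refine hA.eq_zero_of_comp_toTop G k hk (G.phase_lt_of_cut hGk) _
      (eq_zero_of_comp_mor₁_eq_zero hT (hA.hom_shift_eq_zero H hH) _ ?_)
    simp only [Preadditive.sub_comp, Category.assoc, hβ, hα, Category.id_comp, sub_self]
  · rw [← sub_eq_zero]
    refine hX.eq_zero_of_comp_toTop F l hl (F.phase_lt_of_cut hFl) _ ?_
    simp only [Preadditive.sub_comp, Category.assoc, hα, hβ, Category.id_comp, sub_self]

variable {M : Type*} [AddCommGroup M] {f : C → M} {T : Triangle C}
  {G : HNFiltration C S.P T.obj₁} {F : HNFiltration C S.P T.obj₂} {H : HNFiltration C S.P T.obj₃}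

lemma map_objN_eq_zero_of_cut (hf : IsTriangleAdditive f) (hT : T ∈ distTriang C)
    (hF : ∀ i, f (F.factor i) = 0) {c : ℝ} (hH : ∀ j, H.phase j < c)
    {k : ℕ} (hk : k ≤ G.n) (hGk : ∀ j : Fin G.n, (j : ℕ) < k ↔ c ≤ G.phase j) :
    f (G.objN k hk) = 0 := by
  obtain ⟨l, hl, hFl⟩ := exists_cut_index F.strictAnti_phase c
  obtain ⟨e⟩ := nonempty_iso_objN_of_distTriang hT G F H hH hk hGk hl hFl
  rw [hf.map_iso e, hf.map_objN F l hl, Finset.sum_eq_zero fun i _ => hF i]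

lemma map_factor_eq_zero_of_le_phase (hf : IsTriangleAdditive f) (hT : T ∈ distTriang C)
    (hF : ∀ i, f (F.factor i) = 0) {c : ℝ} (hH : ∀ j, H.phase j < c)
    (j : Fin G.n) (hj : c ≤ G.phase j) : f (G.factor j) = 0 := by
  have hcut : ∀ (k : ℕ) (hk : k < G.n), c ≤ G.phase ⟨k, hk⟩ → f (G.objN (k + 1) hk) = 0 :=
    fun k hk hc => map_objN_eq_zero_of_cut hf hT hF (fun i => (hH i).trans_le hc) hk fun i => by
      rw [G.strictAnti_phase.le_iff_ge, Fin.le_def, Nat.lt_succ_iff]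
  have hprev : f (G.objN j j.2.le) = 0 := by
    obtain ⟨_ | k, hk⟩ := j
    · exact hf.map_isZero G.isZero_objN_zero
    · exact hcut k _ (hj.trans (G.phase_anti _ _ (Nat.lt_succ_self k)).le)
  simpa [hcut j j.2 hj, hprev] using (hf.map_objN_succ G j j.2).symm

end Truncation

lemma map_factors_eq_zero_of_distTriang {N : Set C} {S : Slicing C N} {f : C → ℂ}
    (hf : IsTriangleAdditive f)
    (hfS : ∀ (φ : ℝ) (X : C), X ∈ S.P φ →
      ∃ m : ℝ, 0 ≤ m ∧ f X = m * Complex.exp (↑(Real.pi * φ) * Complex.I))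
    {T : Triangle C} (hT : T ∈ distTriang C) (G : HNFiltration C S.P T.obj₁)
    (F : HNFiltration C S.P T.obj₂) (H : HNFiltration C S.P T.obj₃)
    (hF : ∀ i, f (F.factor i) = 0) {a c : ℝ} (hca : c ≤ a + 1)
    (hG : ∀ j, a < G.phase j) (hH : ∀ j, H.phase j ∈ Set.Ioo a c) :
    (∀ j, f (G.factor j) = 0) ∧ ∀ j, f (H.factor j) = 0 := by
  have hsum : ∑ x, Sum.elim (fun j => f (G.factor j)) (fun j => f (H.factor j)) x = 0 := by
    rw [Fintype.sum_sum_type]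
    simp only [Sum.elim_inl, Sum.elim_inr]
    rw [← hf.map_eq_sum G, ← hf.map_eq_sum H, ← hf T hT, hf.map_eq_sum F,
      Finset.sum_eq_zero fun i _ => hF i]
  have hφ : ∀ x ∈ Finset.univ, Sum.elim (fun j => f (G.factor j)) (fun j => f (H.factor j)) x ≠ 0 →
      Sum.elim G.phase H.phase x ∈ Set.Ioo a (a + 1) := by
    rintro (j | j) - hj
    · have hjc : G.phase j < c := lt_of_not_ge fun h =>
        hj (map_factor_eq_zero_of_le_phase hf hT hF (fun i => (hH i).2) j h)
      exact ⟨hG j, hjc.trans_le hca⟩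
    · exact ⟨(hH j).1, (hH j).2.trans_le hca⟩
  have hzero := (sum_eq_zero_iff_of_phase_mem_Ioo Finset.univ _ _
    (by rintro (j | j) -; exacts [hfS _ _ (G.factor_mem j), hfS _ _ (H.factor_mem j)]) hφ).1 hsum
  exact ⟨fun j => hzero (.inl j) (Finset.mem_univ _), fun j => hzero (.inr j) (Finset.mem_univ _)⟩

section Massless

omit [FiniteDimensional ℝ E]

lemma ChargeData.isTriangleAdditive (vd : ChargeData C E) (Z : E →L[ℝ] ℂ) :
    IsTriangleAdditive fun X => Z (vd.v X) :=
  fun T hT => by simp only [vd.additive T hT, map_add]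

lemma LaxPreStab.exists_hnFiltration_mass_eq_zero_iff {N : Set C} {vd : ChargeData C E}
    (σ : LaxPreStab C E N vd) {X : C} (hX : X ∈ N) :
    ∃ F : HNFiltration C σ.slicing.P X, σ.mass X = 0 ↔ ∀ i, σ.Z (vd.v (F.factor i)) = 0 := by
  by_cases hX0 : IsZero X
  · exact ⟨.ofIsZero hX0, iff_of_true (by simp [mass, hX0]) fun i => Fin.elim0 i⟩
  · refine ⟨(σ.slicing.hn X hX hX0).some, ?_⟩
    rw [mass, dif_pos ⟨hX, hX0⟩, Finset.sum_eq_zero_iff_of_nonneg fun _ _ => norm_nonneg _]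
    simp

namespace LaxPreStab

variable {vd : ChargeData C E} (σ : LaxPreStab C E Set.univ vd) {Q : Slicing C Set.univ} {δ : ℝ}

lemma mass_eq_zero_of_mass_objN_succ_eq_zero (hδ : δ ≤ 1 / 2)
    (hd : slicingDist σ.slicing Q < ENNReal.ofReal δ) {X : C} (FQ : HNFiltration C Q.P X)
    (k : ℕ) (hk : k < FQ.n) (hX : σ.mass (FQ.objN (k + 1) hk) = 0) :
    σ.mass (FQ.objN k hk.le) = 0 ∧ σ.mass (FQ.factor ⟨k, hk⟩) = 0 := by
  set ψ := FQ.phase ⟨k, hk⟩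
  obtain ⟨F, hF⟩ := σ.exists_hnFiltration_mass_eq_zero_iff (Set.mem_univ (FQ.objN (k + 1) hk))
  obtain ⟨G, hG⟩ := σ.exists_hnFiltration_mass_eq_zero_iff (Set.mem_univ (FQ.objN k hk.le))
  obtain ⟨H, hH⟩ := σ.exists_hnFiltration_mass_eq_zero_iff (Set.mem_univ (FQ.factor ⟨k, hk⟩))
  have hGψ : ∀ j, ψ - δ < G.phase j := fun j =>
    (phase_mem_Ioo_of_slicingDist_lt hd trivial G (FQ.trunc k hk.le)
      (fun i => (FQ.phase_anti ⟨i, lt_trans i.2 hk⟩ ⟨k, hk⟩ i.2).le)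
      (fun i => FQ.phase_le_phase_zero (by omega) ⟨i, lt_trans i.2 hk⟩) j).1
  have hHψ : ∀ j, H.phase j ∈ Set.Ioo (ψ - δ) (ψ + δ) := fun j =>
    phase_mem_Ioo_of_slicingDist_lt hd trivial H
      (.single (FQ.factor_mem ⟨k, hk⟩) (FQ.factor_nonzero _)) (fun _ => le_rfl) (fun _ => le_rfl) j
  obtain ⟨hGz, hHz⟩ := map_factors_eq_zero_of_distTriang (vd.isTriangleAdditive σ.Z) σ.compat
    (FQ.step_distinguished k hk) G F H (hF.1 hX) (by linarith) hGψ hHψ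
  exact ⟨hG.2 hGz, hH.2 hHz⟩

lemma mass_objN_eq_zero (hδ : δ ≤ 1 / 2) (hd : slicingDist σ.slicing Q < ENNReal.ofReal δ)
    {X : C} (FQ : HNFiltration C Q.P X) (hX : σ.mass X = 0) :
    ∀ (k : ℕ) (hk : k ≤ FQ.n), σ.mass (FQ.objN k hk) = 0
  | k, hk =>
    if h : k = FQ.n then by
      subst h
      rwa [FQ.objN_last]
    else (σ.mass_eq_zero_of_mass_objN_succ_eq_zero hδ hd FQ k (by omega)
      (mass_objN_eq_zero hδ hd FQ hX (k + 1) (by omega))).1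
  termination_by k => FQ.n - k

lemma mass_factor_eq_zero (hδ : δ ≤ 1 / 2) (hd : slicingDist σ.slicing Q < ENNReal.ofReal δ)
    {X : C} (FQ : HNFiltration C Q.P X) (hX : σ.mass X = 0) (i : Fin FQ.n) :
    σ.mass (FQ.factor i) = 0 :=
  (σ.mass_eq_zero_of_mass_objN_succ_eq_zero hδ hd FQ i i.2
    (σ.mass_objN_eq_zero hδ hd FQ hX (i + 1) i.2)).2

end LaxPreStab

end Massless

/-- slicings close to a lax pre-stability condition restrict to its massless
subcategory; in particular this holds for lax pre-stability conditions in `B_ε(σ)`. -/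
theorem statement_7 (vd : ChargeData C E) (σ : LaxPreStab C E Set.univ vd) :
    (∀ QS : Slicing C Set.univ, slicingDist σ.slicing QS < ENNReal.ofReal (1 / 8) →
      ∀ X ∈ σ.massless, ¬ IsZero X →
        ∀ (Fl : HNFiltration C QS.P X) (i : Fin Fl.n), Fl.factor i ∈ σ.massless) ∧
    (∀ ε : ℝ, 0 < ε → ε < 1 / 8 → ∀ τ : LaxPreStab C E Set.univ vd, memB σ τ ε →
      ∀ X ∈ σ.massless, ¬ IsZero X →
        ∀ (Fl : HNFiltration C τ.slicing.P X) (i : Fin Fl.n), Fl.factor i ∈ σ.massless) := by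
  refine ⟨fun Q hd X hX _ Fl i => ⟨trivial, σ.mass_factor_eq_zero (by norm_num) hd Fl hX.2 i⟩,
    fun ε _ hε τ hτ X hX _ Fl i => ⟨trivial, σ.mass_factor_eq_zero (by linarith) hτ.1 Fl hX.2 i⟩⟩

end PaperStab
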